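/- Let (Ω, 𝒜, μ) be a finite measure space, φ a Young function, and 𝔇 a σ-subalgebra. If for every f ∈ L^φ(Ω, 𝔇, μ) the conditional expectations E(f | 𝒜ₙ) converge to f in L^φ norm, then the sequence of σ-subalgebras {𝒜ₙ} μ-converges to 𝔇, i.e., for every D ∈ 𝔇 there exist Aₙ ∈ 𝒜ₙ with μ(Aₙ Δ D) → 0. -/

import Mathlib

open MeasureTheory Filter Topology

def IsYoung (φ : ℝ → ℝ) : Prop :=
  ConvexOn ℝ Set.univ φ ∧ Continuous φ ∧ (∀ x, φ (-x) = φ x) ∧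
    (∀ x, φ x = 0 ↔ x = 0) ∧ Tendsto (fun x => φ x / x) atTop atTop

noncomputable def luxNorm {Ω : Type*} {m : MeasurableSpace Ω} (μ : Measure Ω)
    (φ : ℝ → ℝ) (f : Ω → ℝ) : ℝ :=
  sInf {k : ℝ | 0 < k ∧ ∫ x, φ (|f x| / k) ∂μ ≤ 1}

/-!
Take `f = 1_D` and `Aₙ = {E(f | 𝒜ₙ) > 1/2}`. Off `{|E(f | 𝒜ₙ) - f| ≥ 1/2}` the sets `Aₙ` and `D`
agree, so it suffices that `E(f | 𝒜ₙ) - f → 0` in measure. These differences are bounded by `1`, and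
for bounded `g` Markov's inequality applied to `φ (|g| / k)` gives `μ {s ≤ |g|} ≤ 1 / φ (s / c)`
whenever `luxNorm μ φ g < c`; since `φ → ∞`, Luxemburg-norm convergence implies convergence in
measure.
-/

namespace IsYoung

variable {φ : ℝ → ℝ}

lemma map_zero (hφ : IsYoung φ) : φ 0 = 0 :=
  (hφ.2.2.2.1 0).mpr rfl

/-- `a` lies on the segment `[-|b|, |b|]`, where the even convex function `φ` is at most `φ b`. -/
lemma le_of_abs_le (hφ : IsYoung φ) {a b : ℝ} (h : |a| ≤ |b|) : φ a ≤ φ b := by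
  have h_abs : φ |b| = φ b := by
    rcases abs_choice b with hb | hb <;> simp only [hb, hφ.2.2.1]
  have h_seg : a ∈ segment ℝ (-|b|) |b| := by
    rw [segment_eq_Icc (by linarith [abs_nonneg b])]
    exact abs_le.mp h
  have := hφ.1.le_on_segment (Set.mem_univ _) (Set.mem_univ _) h_seg
  rwa [hφ.2.2.1, max_self, h_abs] at this

lemma nonneg (hφ : IsYoung φ) (x : ℝ) : 0 ≤ φ x :=
  hφ.map_zero ▸ hφ.le_of_abs_le (by simp)

lemma monotoneOn (hφ : IsYoung φ) : MonotoneOn φ (Set.Ici 0) := fun _ ha _ _ hab =>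
  hφ.le_of_abs_le (abs_le_abs_of_nonneg ha hab)

lemma tendsto_atTop (hφ : IsYoung φ) : Tendsto φ atTop atTop := by
  refine tendsto_atTop_mono' atTop ?_ hφ.2.2.2.2
  filter_upwards [eventually_ge_atTop (1 : ℝ)] with x hx
  rw [div_le_iff₀ (by linarith)]
  nlinarith [hφ.nonneg x]

variable {Ω : Type*} {m0 : MeasurableSpace Ω} {μ : Measure Ω}

lemma integrable_comp_abs_div (hφ : IsYoung φ) [IsFiniteMeasure μ] {g : Ω → ℝ} {C : ℝ}
    (hg : AEStronglyMeasurable g μ) (hC : ∀ᵐ x ∂μ, |g x| ≤ C) (k : ℝ) :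
    Integrable (fun x => φ (|g x| / k)) μ := by
  refine Integrable.mono' (integrable_const (φ (C / |k|)))
    (hφ.2.1.comp_aestronglyMeasurable (by fun_prop)) ?_
  filter_upwards [hC] with x hx
  rw [Real.norm_of_nonneg (hφ.nonneg _)]
  refine hφ.le_of_abs_le ?_
  rw [abs_div, abs_div, abs_abs, abs_abs]
  exact div_le_div_of_nonneg_right (hx.trans (le_abs_self C)) (abs_nonneg k)

/-- For bounded `g` the infimum defining `luxNorm μ φ g` is over a nonempty set, so it is not the
junk value `sInf ∅ = 0`. -/
lemma exists_integral_le_one (hφ : IsYoung φ) [IsFiniteMeasure μ] {g : Ω → ℝ} {C : ℝ}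
    (hg : AEStronglyMeasurable g μ) (hC : ∀ᵐ x ∂μ, |g x| ≤ C) :
    ∃ k > 0, ∫ x, φ (|g x| / k) ∂μ ≤ 1 := by
  have h_lim : Tendsto (fun k : ℝ => μ.real Set.univ * φ (C / k)) atTop (𝓝 0) := by
    have := (hφ.2.1.tendsto 0).comp ((tendsto_const_nhds (x := C)).div_atTop tendsto_id)
    simpa [hφ.map_zero, Function.comp_def] using this.const_mul (μ.real Set.univ)
  obtain ⟨k, hk_pos, hk⟩ :=
    ((eventually_gt_atTop 0).and (h_lim.eventually (ge_mem_nhds one_pos))).exists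
  refine ⟨k, hk_pos, le_trans ?_ hk⟩
  calc ∫ x, φ (|g x| / k) ∂μ ≤ ∫ _, φ (C / k) ∂μ := by
        refine integral_mono_ae (hφ.integrable_comp_abs_div hg hC k) (integrable_const _) ?_
        filter_upwards [hC] with x hx
        have hC0 : 0 ≤ C := (abs_nonneg _).trans hx
        exact hφ.monotoneOn (show 0 ≤ |g x| / k by positivity) (show 0 ≤ C / k by positivity)
          (by gcongr)
    _ = μ.real Set.univ * φ (C / k) := by rw [integral_const, smul_eq_mul]

lemma integrable_comp_abs_indicator_one (hφ : IsYoung φ) [IsFiniteMeasure μ] {D : Set Ω}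
    (hD : MeasurableSet D) : Integrable (fun x => φ (1 * |D.indicator 1 x|)) μ := by
  refine ((integrable_const (φ 1)).indicator hD).congr (ae_of_all _ fun x => ?_)
  by_cases hx : x ∈ D <;> simp [hx, hφ.map_zero]

lemma mul_measureReal_le_one_of_luxNorm_lt (hφ : IsYoung φ) [IsFiniteMeasure μ] {g : Ω → ℝ}
    (hint : ∀ k, Integrable (fun x => φ (|g x| / k)) μ)
    (hne : ∃ k > 0, ∫ x, φ (|g x| / k) ∂μ ≤ 1) {s c : ℝ} (hs : 0 ≤ s)
    (hc : luxNorm μ φ g < c) :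
    φ (s / c) * μ.real {x | s ≤ |g x|} ≤ 1 := by
  obtain ⟨k, ⟨hk_pos, hk_int⟩, hkc⟩ :=
    (csInf_lt_iff ⟨0, fun k hk => hk.1.le⟩ hne).mp hc
  have hc_pos : 0 < c := hk_pos.trans hkc
  have h_sub : {x | s ≤ |g x|} ⊆ {x | φ (s / c) ≤ φ (|g x| / k)} := fun x hx =>
    hφ.monotoneOn (show 0 ≤ s / c by positivity) (show 0 ≤ |g x| / k by positivity)
      ((div_le_div_of_nonneg_left hs hk_pos hkc.le).trans (by gcongr; exact hx))
  calc φ (s / c) * μ.real {x | s ≤ |g x|}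
      ≤ φ (s / c) * μ.real {x | φ (s / c) ≤ φ (|g x| / k)} :=
        mul_le_mul_of_nonneg_left (measureReal_mono h_sub) (hφ.nonneg _)
    _ ≤ ∫ x, φ (|g x| / k) ∂μ :=
        mul_meas_ge_le_integral_of_nonneg (ae_of_all _ fun _ => hφ.nonneg _) (hint k) _
    _ ≤ 1 := hk_int

theorem tendstoInMeasure_of_tendsto_luxNorm (hφ : IsYoung φ) [IsFiniteMeasure μ] {ι : Type*}
    {l : Filter ι} {g : ι → Ω → ℝ} {C : ℝ} (hg : ∀ i, AEStronglyMeasurable (g i) μ)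
    (hC : ∀ i, ∀ᵐ x ∂μ, |g i x| ≤ C) (hL : Tendsto (fun i => luxNorm μ φ (g i)) l (𝓝 0)) :
    TendstoInMeasure μ g l 0 := by
  rw [tendstoInMeasure_iff_measureReal_dist]
  intro s hs
  simp only [Pi.zero_apply, Real.dist_0_eq_abs]
  refine tendsto_order.2 ⟨fun a ha => .of_forall fun _ => ha.trans_le measureReal_nonneg,
    fun δ hδ => ?_⟩
  obtain ⟨t, ht_pos, ht⟩ :=
    ((eventually_gt_atTop 0).and (hφ.tendsto_atTop.eventually_gt_atTop (1 / δ))).exists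
  filter_upwards [hL.eventually (gt_mem_nhds (div_pos hs ht_pos))] with i hi
  have h_markov := hφ.mul_measureReal_le_one_of_luxNorm_lt
    (hφ.integrable_comp_abs_div (hg i) (hC i)) (hφ.exists_integral_le_one (hg i) (hC i)) hs.le hi
  rw [div_div_cancel₀ hs.ne'] at h_markov
  rw [div_lt_iff₀ hδ] at ht
  exact lt_of_mul_lt_mul_left (h_markov.trans_lt ht) (hφ.nonneg t)

end IsYoung

section

variable {Ω : Type*} {m m0 : MeasurableSpace Ω} {μ : Measure Ω}

lemma ae_abs_condExp_sub_le_one [IsFiniteMeasure μ] (hm : m ≤ m0) {f : Ω → ℝ}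
    (hf : Integrable f μ) (hf_01 : ∀ᵐ x ∂μ, f x ∈ Set.Icc 0 1) :
    ∀ᵐ x ∂μ, |μ[f | m] x - f x| ≤ 1 := by
  have h_nonneg : 0 ≤ᵐ[μ] μ[f | m] := condExp_nonneg (hf_01.mono fun _ hx => hx.1)
  have h_le_one : μ[f | m] ≤ᵐ[μ] fun _ => 1 := by
    simpa only [condExp_const hm] using
      condExp_mono (m := m) hf (integrable_const 1) (hf_01.mono fun _ hx => hx.2)
  filter_upwards [h_nonneg, h_le_one, hf_01] with x h0 h1 hfx
  rw [abs_le]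
  constructor <;> linarith [hfx.1, hfx.2, show (0 : ℝ) ≤ μ[f | m] x from h0]

end

lemma symmDiff_setOf_half_lt_subset {Ω : Type*} (h : Ω → ℝ) (D : Set Ω) :
    symmDiff {x | 1 / 2 < h x} D ⊆ {x | 1 / 2 ≤ |h x - D.indicator 1 x|} := by
  intro x hx
  rcases Set.mem_symmDiff.mp hx with ⟨hx_lt, hxD⟩ | ⟨hxD, hx_le⟩
  · rw [Set.mem_ofPred_eq, Set.indicator_of_notMem hxD, sub_zero]
    exact hx_lt.le.trans (le_abs_self _)
  · have : h x ≤ 1 / 2 := not_lt.mp hx_le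
    rw [Set.mem_ofPred_eq, Set.indicator_of_mem hxD, Pi.one_apply, abs_sub_comm]
    exact (le_abs_self _).trans' (by linarith)

theorem stmt_8 {Ω : Type*} {m0 : MeasurableSpace Ω} (μ : Measure Ω) [IsFiniteMeasure μ]
    (φ : ℝ → ℝ) (hφ : IsYoung φ)
    (𝒜 : ℕ → MeasurableSpace Ω) (h𝒜 : ∀ n, 𝒜 n ≤ m0)
    (𝔇 : MeasurableSpace Ω) (h𝔇 : 𝔇 ≤ m0)
    (hcv : ∀ f : Ω → ℝ, StronglyMeasurable[𝔇] f →
      (∃ α > 0, Integrable (fun x => φ (α * |f x|)) μ) →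
      Tendsto (fun n => luxNorm μ φ (fun x => (μ[f | 𝒜 n]) x - f x)) atTop (𝓝 0)) :
    ∀ D : Set Ω, MeasurableSet[𝔇] D → ∃ As : ℕ → Set Ω,
      (∀ n, MeasurableSet[𝒜 n] (As n)) ∧
      Tendsto (fun n => μ (symmDiff (As n) D)) atTop (𝓝 0) := by
  intro D hD
  set f : Ω → ℝ := D.indicator 1
  have hD₀ : MeasurableSet[m0] D := h𝔇 D hD
  have hf_int : Integrable f μ := (integrable_const 1).indicator hD₀
  have hf_01 : ∀ᵐ x ∂μ, f x ∈ Set.Icc 0 1 :=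
    ae_of_all _ fun x => by by_cases hx : x ∈ D <;> simp [f, hx]
  have h_conv : TendstoInMeasure μ (fun n x => μ[f | 𝒜 n] x - f x) atTop 0 :=
    hφ.tendstoInMeasure_of_tendsto_luxNorm
      (fun n => (stronglyMeasurable_condExp.mono (h𝒜 n)).aestronglyMeasurable.sub hf_int.1)
      (fun n => ae_abs_condExp_sub_le_one (h𝒜 n) hf_int hf_01)
      (hcv f (stronglyMeasurable_one.indicator hD)
        ⟨1, one_pos, hφ.integrable_comp_abs_indicator_one hD₀⟩)
  refine ⟨fun n => {x | 1 / 2 < μ[f | 𝒜 n] x},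
    fun n => measurableSet_lt measurable_const stronglyMeasurable_condExp.measurable, ?_⟩
  refine tendsto_of_tendsto_of_tendsto_of_le_of_le tendsto_const_nhds
    (tendstoInMeasure_iff_dist.mp h_conv (1 / 2) (by norm_num)) (fun _ => zero_le)
    fun n => measure_mono ?_
  simpa only [Pi.zero_apply, Real.dist_0_eq_abs] using symmDiff_setOf_half_lt_subset _ D
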